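/- arXiv:2012.12747 — 2 statements merged into one kernel-verified Lean document; each statement's English description precedes it below -/
import Mathlib

section
/- Let K: ℝ^{3n} → ℝ satisfy the size condition |K(x,y,z)| ≤ A(|x-y|+|x-z|)^{-2n}, let φ be a smooth cutoff with 0 ≤ φ ≤ 1, φ ≡ 1 on [0,1], φ ≡ 0 on [2,∞), and K_η(x,y,z) = K(x,y,z)[1-φ((2/η)(|x-y|+|x-z|))]. Let b ∈ C_c^∞(ℝ^n). Then for every x ∈ ℝ^n, η > 0, and measurable f, g, the pointwise bound sup_{δ>0} |∬_{δ<|x-y|+|x-z|≤η} K(x,y,z)φ((2/η)(|x-y|+|x-z|))(b(x)-b(y))f(y)g(z) dy dz| ≤ C η ‖∇b‖_∞ · 𝓜(f,g)(x) holds, where C depends only on n and A, and 𝓜 is the bilinear Hardy–Littlewood maximal operator. -/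
open MeasureTheory Filter Set ENNReal
open scoped Topology

noncomputable section

/-- Euclidean space `ℝ^n`. -/
abbrev En (n : ℕ) := EuclideanSpace ℝ (Fin n)

/-- The cube in `ℝ^n` centered at `c` with side length `2r`. -/
def cube {n : ℕ} (c : En n) (r : ℝ) : Set (En n) := {y | ∀ i, |y i - c i| ≤ r}

/-- The bilinear Hardy–Littlewood maximal operator
`𝓜(f,g)(x) = sup_{Q ∋ x} (|Q|⁻¹∫_Q |f|)(|Q|⁻¹∫_Q |g|)`, valued in `ℝ≥0∞`. -/
def biMax {n : ℕ} (f g : En n → ℝ) (x : En n) : ℝ≥0∞ :=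
  ⨆ (c : En n) (r : ℝ) (_ : 0 < r) (_ : x ∈ cube c r),
    ((∫⁻ y in cube c r, ENNReal.ofReal |f y|) / volume (cube c r)) *
    ((∫⁻ z in cube c r, ENNReal.ofReal |g z|) / volume (cube c r))

lemma abs_coord_le_norm {n : ℕ} (v : En n) (i : Fin n) : |v i| ≤ ‖v‖ := by
  rw [EuclideanSpace.norm_eq]
  rw [← Real.sqrt_sq_eq_abs]
  apply Real.sqrt_le_sqrt
  have := Finset.single_le_sum (f := fun j => ‖v j‖^2) (fun j _ => sq_nonneg _) (Finset.mem_univ i)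
  simpa [Real.norm_eq_abs, sq_abs] using this

lemma cube_eq_preimage {n : ℕ} (c : En n) (r : ℝ) :
    cube c r = (MeasurableEquiv.toLp 2 (Fin n → ℝ)).symm ⁻¹'
      (Set.univ.pi fun i => Icc (c i - r) (c i + r)) := by
  ext y
  simp only [cube, mem_setOf_eq, mem_preimage, Set.mem_pi, mem_univ, forall_true_left, mem_Icc,
    MeasurableEquiv.toLp_symm_apply]
  refine forall_congr' fun i => ?_
  rw [abs_le]
  constructor <;> (rintro ⟨h1, h2⟩; constructor <;> linarith)

lemma volume_cube {n : ℕ} (c : En n) (r : ℝ) :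
    volume (cube c r) = ENNReal.ofReal (2*r) ^ n := by
  rw [cube_eq_preimage]
  rw [(EuclideanSpace.volume_preserving_symm_measurableEquiv_toLp (Fin n)).measure_preimage
    (MeasurableSet.univ_pi fun i => measurableSet_Icc).nullMeasurableSet]
  rw [volume_pi_pi]
  simp [Real.volume_Icc]
  congr 1
  rw [← two_mul, ENNReal.ofReal_mul (by norm_num), ENNReal.ofReal_ofNat]

/-- pointwise bound for the difference between the sharply and the smoothly
truncated commutators: for `b ∈ C_c^∞` with `‖∇b‖_∞ ≤ Nb`,
`sup_{δ>0} |∬_{δ<|x-y|+|x-z|≤η} K(x,y,z) φ((2/η)(|x-y|+|x-z|)) (b(x)-b(y)) f(y)g(z) dy dz|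
  ≤ C η Nb 𝓜(f,g)(x)`, with `C = C(n,A)`. -/
theorem smooth_truncation_difference_bound (n : ℕ) (hn : 1 ≤ n) (A : ℝ) (hA : 0 < A)
    (K : En n → En n → En n → ℝ)
    (hK : ∀ x y z : En n, (y, z) ≠ (x, x) →
      |K x y z| ≤ A * (‖x - y‖ + ‖x - z‖) ^ (-(2 * (n:ℝ)))) :
    ∃ C : ℝ, 0 < C ∧
      ∀ (φ : ℝ → ℝ), ContDiffOn ℝ (⊤ : ℕ∞) φ (Ici 0) → (∀ t, 0 ≤ t → 0 ≤ φ t ∧ φ t ≤ 1) →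
        (∀ t ∈ Icc (0:ℝ) 1, φ t = 1) → (∀ t, 2 ≤ t → φ t = 0) →
      ∀ (b : En n → ℝ), ContDiff ℝ (⊤ : ℕ∞) b → HasCompactSupport b →
      ∀ (Nb : ℝ), (∀ x, ‖fderiv ℝ b x‖ ≤ Nb) →
      ∀ (f g : En n → ℝ), Measurable f → Measurable g →
      ∀ (x : En n) (η : ℝ), 0 < η →
      (⨆ (δ : ℝ) (_ : 0 < δ), ENNReal.ofReal
          |∫ q in {q : En n × En n |
              δ < ‖x - q.1‖ + ‖x - q.2‖ ∧ ‖x - q.1‖ + ‖x - q.2‖ ≤ η},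
            K x q.1 q.2 * φ (2/η * (‖x - q.1‖ + ‖x - q.2‖)) *
              (b x - b q.1) * f q.1 * g q.2|) ≤
        ENNReal.ofReal (C * η * Nb) * biMax f g x := by
  refine ⟨2^(4*n+1) * A, by positivity, ?_⟩
  intro φ hφs hφ01 hφ1 hφ0 b hb hbsupp Nb hNb f g hf hg x η hη
  set d : En n × En n → ℝ := fun q => ‖x - q.1‖ + ‖x - q.2‖ with hd
  set h : En n × En n → ℝ := fun q =>
    K x q.1 q.2 * φ (2/η * d q) * (b x - b q.1) * f q.1 * g q.2 with hdefh
  have hNb0 : 0 ≤ Nb := le_trans (norm_nonneg _) (hNb x)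
  have hb_lip : ∀ y : En n, |b x - b y| ≤ Nb * ‖x - y‖ := by
    intro y
    have := Convex.norm_image_sub_le_of_norm_fderiv_le
      (f := b) (fun z _ => (hb.differentiable (by simp)) z)
      (fun z _ => hNb z) convex_univ (mem_univ y) (mem_univ x)
    simpa [Real.norm_eq_abs, norm_sub_rev] using this
  -- the annuli
  set S : ℕ → Set (En n × En n) := fun k => {q | η/2^(k+1) < d q ∧ d q ≤ η/2^k} with hS
  -- constant for each annulus
  set D : ℝ := 2^(4*n) * A * Nb * η with hD
  have hD0 : 0 ≤ D := by positivity
  -- bound on each annulus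
  have hannulus : ∀ k : ℕ, (∫⁻ q in S k, ENNReal.ofReal |h q|) ≤
      ENNReal.ofReal (D * (1/2)^k) * biMax f g x := by
    intro k
    set r : ℝ := η/2^k with hr
    have hr0 : 0 < r := by positivity
    set c : ℝ := A * (r/2) ^ (-(2 * (n:ℝ))) * (Nb * r) with hc
    have hc0 : 0 ≤ c := by
      have : (0:ℝ) ≤ (r/2) ^ (-(2 * (n:ℝ))) := Real.rpow_nonneg (by positivity) _
      positivity
    -- pointwise bound on the annulus
    have hpt : ∀ q ∈ S k, ENNReal.ofReal |h q| ≤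
        ENNReal.ofReal c * (ENNReal.ofReal |f q.1| * ENNReal.ofReal |g q.2|) := by
      rintro q ⟨hq1, hq2⟩
      have hdq0 : 0 < d q := lt_of_le_of_lt (by positivity) hq1
      have hdn : d q ≥ 0 := hdq0.le
      have hqne : (q.1, q.2) ≠ (x, x) := by
        intro hcon
        apply absurd hdq0
        simp only [hd]
        rw [Prod.mk.injEq] at hcon
        simp [hcon.1, hcon.2]
      have hKb : |K x q.1 q.2| ≤ A * (r/2) ^ (-(2 * (n:ℝ))) := by
        refine le_trans (hK x q.1 q.2 hqne) ?_
        apply mul_le_mul_of_nonneg_left _ hA.le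
        apply Real.rpow_le_rpow_of_nonpos (by positivity) ?_ (neg_nonpos.mpr (by positivity))
        calc (r/2 : ℝ) = η/2^(k+1) := by rw [hr]; ring
          _ ≤ d q := hq1.le
      have hφb : |φ (2/η * d q)| ≤ 1 := by
        have h01 := hφ01 (2/η * d q) (by positivity)
        rw [abs_le]; exact ⟨by linarith [h01.1], h01.2⟩
      have hbb : |b x - b q.1| ≤ Nb * r := by
        refine le_trans (hb_lip q.1) ?_
        apply mul_le_mul_of_nonneg_left _ hNb0
        calc ‖x - q.1‖ ≤ d q := le_add_of_nonneg_right (norm_nonneg _)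
          _ ≤ r := hq2
      have habs : |h q| ≤ c * (|f q.1| * |g q.2|) := by
        have : |h q| = |K x q.1 q.2| * |φ (2/η * d q)| * |b x - b q.1| * |f q.1| * |g q.2| := by
          simp [hdefh, abs_mul]
        rw [this, hc]
        have h1 : |K x q.1 q.2| * |φ (2/η * d q)| ≤ A * (r/2) ^ (-(2 * (n:ℝ))) * 1 := by
          apply mul_le_mul hKb hφb (abs_nonneg _)
          have : (0:ℝ) ≤ (r/2) ^ (-(2 * (n:ℝ))) := Real.rpow_nonneg (by positivity) _
          positivity
        rw [mul_one] at h1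
        have h2 : |K x q.1 q.2| * |φ (2/η * d q)| * |b x - b q.1| ≤
            A * (r/2) ^ (-(2 * (n:ℝ))) * (Nb * r) := by
          apply mul_le_mul h1 hbb (abs_nonneg _)
          have : (0:ℝ) ≤ (r/2) ^ (-(2 * (n:ℝ))) := Real.rpow_nonneg (by positivity) _
          positivity
        calc |K x q.1 q.2| * |φ (2/η * d q)| * |b x - b q.1| * |f q.1| * |g q.2|
            ≤ A * (r/2) ^ (-(2 * (n:ℝ))) * (Nb * r) * |f q.1| * |g q.2| := by
              apply mul_le_mul_of_nonneg_right _ (abs_nonneg _)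
              exact mul_le_mul_of_nonneg_right h2 (abs_nonneg _)
          _ = A * (r/2) ^ (-(2 * (n:ℝ))) * (Nb * r) * (|f q.1| * |g q.2|) := by ring
      calc ENNReal.ofReal |h q| ≤ ENNReal.ofReal (c * (|f q.1| * |g q.2|)) :=
            ENNReal.ofReal_le_ofReal habs
        _ = ENNReal.ofReal c * (ENNReal.ofReal |f q.1| * ENNReal.ofReal |g q.2|) := by
            rw [ENNReal.ofReal_mul hc0, ENNReal.ofReal_mul (abs_nonneg _)]
    -- annulus sits inside the cube product
    have hsub : S k ⊆ cube x r ×ˢ cube x r := by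
      rintro q ⟨_, hq2⟩
      have h1 : ‖x - q.1‖ ≤ r := le_trans (le_add_of_nonneg_right (norm_nonneg _)) hq2
      have h2 : ‖x - q.2‖ ≤ r := le_trans (le_add_of_nonneg_left (norm_nonneg _)) hq2
      constructor
      · intro i
        calc |q.1 i - x i| = |(x - q.1) i| := by
              rw [show (x - q.1) i = x i - q.1 i from rfl, abs_sub_comm]
          _ ≤ ‖x - q.1‖ := abs_coord_le_norm _ _
          _ ≤ r := h1
      · intro i
        calc |q.2 i - x i| = |(x - q.2) i| := by
              rw [show (x - q.2) i = x i - q.2 i from rfl, abs_sub_comm]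
          _ ≤ ‖x - q.2‖ := abs_coord_le_norm _ _
          _ ≤ r := h2
    set If : ℝ≥0∞ := ∫⁻ y in cube x r, ENNReal.ofReal |f y| with hIf
    set Ig : ℝ≥0∞ := ∫⁻ z in cube x r, ENNReal.ofReal |g z| with hIg
    set V : ℝ≥0∞ := volume (cube x r) with hV
    have hVval : V = ENNReal.ofReal (2*r) ^ n := volume_cube x r
    have hV0 : V ≠ 0 := by
      rw [hVval]
      exact pow_ne_zero _ (ENNReal.ofReal_pos.mpr (by positivity)).ne'
    have hVtop : V ≠ ∞ := by rw [hVval]; exact pow_ne_top ENNReal.ofReal_ne_top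
    have hxc : x ∈ cube x r := fun i => by simpa using hr0.le
    have hmax : (If / V) * (Ig / V) ≤ biMax f g x := by
      refine le_iSup_of_le x ?_
      refine le_iSup_of_le r ?_
      refine le_iSup_of_le hr0 ?_
      exact le_iSup_of_le hxc le_rfl
    have hprod : If * Ig ≤ V * V * biMax f g x := by
      calc If * Ig = ((If / V) * V) * ((Ig / V) * V) := by
            rw [ENNReal.div_mul_cancel hV0 hVtop, ENNReal.div_mul_cancel hV0 hVtop]
        _ = ((If / V) * (Ig / V)) * (V * V) := by ring
        _ ≤ biMax f g x * (V * V) := by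
            exact mul_le_mul_left hmax _
        _ = V * V * biMax f g x := by ring
    -- compute the constant
    have hrpow : (r/2 : ℝ) ^ (-(2 * (n:ℝ))) = ((r/2)^(2*n))⁻¹ := by
      rw [show (2 * (n:ℝ)) = ((2*n : ℕ) : ℝ) by push_cast; ring,
        Real.rpow_neg (by positivity), Real.rpow_natCast]
    have hconst : c * ((2*r)^n)^2 = D * (1/2)^k := by
      rw [hc, hrpow, hD, hr]
      have h2k : (2:ℝ)^k ≠ 0 := by positivity
      field_simp
      simp only [div_pow, mul_pow, ← pow_mul]
      field_simp
      ring
    have hmf : Measurable (fun y : En n => ENNReal.ofReal |f y|) := hf.abs.ennreal_ofReal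
    have hmg : Measurable (fun z : En n => ENNReal.ofReal |g z|) := hg.abs.ennreal_ofReal
    have hmeas : Measurable (fun q : En n × En n =>
        ENNReal.ofReal c * (ENNReal.ofReal |f q.1| * ENNReal.ofReal |g q.2|)) :=
      ((hmf.comp measurable_fst).mul (hmg.comp measurable_snd)).const_mul _
    calc (∫⁻ q in S k, ENNReal.ofReal |h q|)
        ≤ ∫⁻ q in S k, ENNReal.ofReal c *
            (ENNReal.ofReal |f q.1| * ENNReal.ofReal |g q.2|) :=
          setLIntegral_mono hmeas hpt
      _ ≤ ∫⁻ q in cube x r ×ˢ cube x r, ENNReal.ofReal c *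
            (ENNReal.ofReal |f q.1| * ENNReal.ofReal |g q.2|) :=
          lintegral_mono_set hsub
      _ = ENNReal.ofReal c * ∫⁻ q in cube x r ×ˢ cube x r,
            (ENNReal.ofReal |f q.1| * ENNReal.ofReal |g q.2|) :=
          lintegral_const_mul' _ _ ENNReal.ofReal_ne_top
      _ = ENNReal.ofReal c * (If * Ig) := by
          rw [Measure.volume_eq_prod, ← Measure.prod_restrict,
            lintegral_prod_mul (f := fun y => ENNReal.ofReal |f y|)
              (g := fun z => ENNReal.ofReal |g z|) hmf.aemeasurable hmg.aemeasurable]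
      _ ≤ ENNReal.ofReal c * (V * V * biMax f g x) := mul_le_mul_right hprod _
      _ = (ENNReal.ofReal c * (V * V)) * biMax f g x := by ring
      _ = ENNReal.ofReal (D * (1/2)^k) * biMax f g x := by
          congr 1
          rw [hVval, ← ENNReal.ofReal_pow (by positivity : (0:ℝ) ≤ 2*r),
            ← ENNReal.ofReal_mul (by positivity : (0:ℝ) ≤ (2*r)^n),
            ← ENNReal.ofReal_mul hc0, ← hconst]
          congr 1
          ring
  -- covering by annuli
  have hcover : ∀ δ : ℝ, 0 < δ →
      {q : En n × En n | δ < d q ∧ d q ≤ η} ⊆ ⋃ k, S k := by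
    rintro δ hδ q ⟨hq1, hq2⟩
    have hdq : 0 < d q := lt_trans hδ hq1
    have hex : ∃ m : ℕ, η/2^(m+1) < d q := by
      obtain ⟨m, hm⟩ := exists_pow_lt_of_lt_one (x := d q / η) (y := (1/2 : ℝ))
        (by positivity) (by norm_num)
      rw [div_pow, one_pow] at hm
      have hm' : 1 * η < d q * 2^m := (div_lt_div_iff₀ (by positivity) hη).mp hm
      refine ⟨m, ?_⟩
      rw [div_lt_iff₀ (by positivity), pow_succ]
      nlinarith [hm', hdq, pow_pos (by norm_num : (0:ℝ) < 2) m]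
    refine mem_iUnion.mpr ⟨Nat.find hex, Nat.find_spec hex, ?_⟩
    rcases Nat.eq_zero_or_pos (Nat.find hex) with h0 | hpos
    · rw [h0]; simpa using hq2
    · obtain ⟨j, hj⟩ := Nat.exists_eq_succ_of_ne_zero hpos.ne'
      have hmin := Nat.find_min hex (m := j) (by omega)
      push_neg at hmin
      rw [hj]
      simpa using hmin
  -- sum the geometric series
  have hsum : ∑' k : ℕ, ENNReal.ofReal (D * (1/2)^k) = ENNReal.ofReal (2 * D) := by
    rw [← ENNReal.ofReal_tsum_of_nonneg (fun k => by positivity)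
      ((summable_geometric_of_lt_one (by norm_num) (by norm_num)).mul_left D)]
    congr 1
    rw [tsum_mul_left, tsum_geometric_of_lt_one (by norm_num) (by norm_num)]
    norm_num
    ring
  -- conclude
  refine iSup_le fun δ => iSup_le fun hδ => ?_
  calc ENNReal.ofReal |∫ q in {q : En n × En n | δ < d q ∧ d q ≤ η}, h q|
      = (‖∫ q in {q : En n × En n | δ < d q ∧ d q ≤ η}, h q‖₊ : ℝ≥0∞) :=
        (Real.enorm_eq_ofReal_abs _).symm
    _ ≤ ∫⁻ q in {q : En n × En n | δ < d q ∧ d q ≤ η}, (‖h q‖₊ : ℝ≥0∞) :=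
        enorm_integral_le_lintegral_enorm _
    _ = ∫⁻ q in {q : En n × En n | δ < d q ∧ d q ≤ η}, ENNReal.ofReal |h q| := by
        apply lintegral_congr
        intro q
        exact Real.enorm_eq_ofReal_abs _
    _ ≤ ∫⁻ q in ⋃ k, S k, ENNReal.ofReal |h q| := lintegral_mono_set (hcover δ hδ)
    _ ≤ ∑' k : ℕ, ∫⁻ q in S k, ENNReal.ofReal |h q| := lintegral_iUnion_le _ _
    _ ≤ ∑' k : ℕ, ENNReal.ofReal (D * (1/2)^k) * biMax f g x :=
        ENNReal.tsum_le_tsum hannulus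
    _ = (∑' k : ℕ, ENNReal.ofReal (D * (1/2)^k)) * biMax f g x := ENNReal.tsum_mul_right
    _ = ENNReal.ofReal (2 * D) * biMax f g x := by rw [hsum]
    _ = ENNReal.ofReal (2^(4*n+1) * A * η * Nb) * biMax f g x := by
        congr 2
        rw [hD]
        ring

end
end

section
/- Let w be a weight on ℝ^n such that w^{-1/(p_0-1)} is also a weight (i.e., locally integrable) for some p_0 > 1. Let 0 < p < ∞ and let 𝓕 ⊂ L^p(w). If (i) sup_{f∈𝓕} ‖f‖_{L^p(w)} < ∞, (ii) lim_{N→∞} sup_{f∈𝓕} ∫_{|x|>N}|f(x)|^p w(x)dx = 0, and (iii) lim_{|h|→0} sup_{f∈𝓕} ∫_{ℝ^n}|f(x+h)-f(x)|^p w(x)dx = 0, then 𝓕 is sequentially compact in L^p(w), i.e., every sequence in 𝓕 has a subsequence converging in L^p(w). -/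
/-!
Put `μ = w dx`. Each `f ∈ F` is close in `L^p(μ)` to a step function on a fine grid of cubes,
taking finitely many possible values. Outside a large ball `f` is small by (ii). On a grid cube
`Q`, take the value `f y` at a point `y` where `∫_Q |f x - f y|^p dμ(x)` is at most its Lebesgue
mean over `y ∈ Q`. Two points of `Q` differ by a small vector, so by Fubini these means are
controlled by the translation modulus (iii). By (i) the values lie in a bounded set and can be
rounded to a finite one.

So `F` is totally bounded for the quasi-metric `∫ |f - g|^p dμ`. A diagonal argument gives a
subsequence that is Cauchy at a geometric rate. It converges a.e. by Borel–Cantelli, and in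
`L^p(μ)` by Fatou.
-/

open MeasureTheory Filter Set ENNReal
open scoped Topology

noncomputable section

namespace FrechetKolmogorov

section QuasiTriangle

variable {α : Type*} [MeasurableSpace α] {μ : Measure α} {p : ℝ}

lemma add_rpow_le_two_rpow_mul (hp : 0 ≤ p) (a b : ℝ≥0∞) :
    (a + b) ^ p ≤ 2 ^ p * (a ^ p + b ^ p) :=
  calc (a + b) ^ p ≤ (2 * max a b) ^ p := by
        gcongr
        rw [two_mul]
        exact add_le_add (le_max_left a b) (le_max_right a b)
    _ = 2 ^ p * max a b ^ p := ENNReal.mul_rpow_of_nonneg _ _ hp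
    _ ≤ 2 ^ p * (a ^ p + b ^ p) := by
        gcongr
        rcases le_total a b with h | h
        · rw [max_eq_right h]; exact le_add_self
        · rw [max_eq_left h]; exact le_self_add

lemma enorm_sub_rpow_le (hp : 0 ≤ p) (a b c : ℝ) :
    ‖a - c‖ₑ ^ p ≤ 2 ^ p * (‖a - b‖ₑ ^ p + ‖b - c‖ₑ ^ p) :=
  calc ‖a - c‖ₑ ^ p ≤ (‖a - b‖ₑ + ‖b - c‖ₑ) ^ p := by
        gcongr
        simpa using enorm_add_le (a - b) (b - c)
    _ ≤ _ := add_rpow_le_two_rpow_mul hp _ _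

lemma lintegral_enorm_sub_rpow_le (hp : 0 ≤ p) {f g h : α → ℝ} (hf : AEMeasurable f μ)
    (hg : AEMeasurable g μ) :
    ∫⁻ x, ‖f x - h x‖ₑ ^ p ∂μ ≤
      2 ^ p * (∫⁻ x, ‖f x - g x‖ₑ ^ p ∂μ + ∫⁻ x, ‖g x - h x‖ₑ ^ p ∂μ) := by
  rw [← lintegral_add_left' (by fun_prop), ← lintegral_const_mul' _ _ (by simp)]
  exact lintegral_mono fun x => enorm_sub_rpow_le hp _ _ _

end QuasiTriangle

lemma lintegral_ofReal_rpow_mul {α : Type*} [MeasurableSpace α] {ν : Measure α} {w : α → ℝ}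
    (hw : AEMeasurable w ν) {p : ℝ} (hp : 0 ≤ p) (g : α → ℝ) :
    ∫⁻ x, ENNReal.ofReal (|g x| ^ p * w x) ∂ν =
      ∫⁻ x, ‖g x‖ₑ ^ p ∂ν.withDensity (fun x => ENNReal.ofReal (w x)) := by
  rw [lintegral_withDensity_eq_lintegral_mul_non_measurable₀ _ hw.ennreal_ofReal
    (ae_of_all _ fun _ => ofReal_lt_top)]
  congr 1 with x
  rw [Pi.mul_apply, Real.enorm_eq_ofReal_abs, ofReal_rpow_of_nonneg (abs_nonneg _) hp,
    ofReal_mul (Real.rpow_nonneg (abs_nonneg _) p), mul_comm]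

/- A nonprincipal ultrafilter picks at each level `m` one `g m` related to `u k` for "most" `k`;
finitely many levels at a time then hold for infinitely many `k`. -/
theorem exists_strictMono_forall_of_finite_nets {α β : Type*} (R : ℕ → α → β → Prop)
    (u : ℕ → α) (h : ∀ m, ∃ G : Set β, G.Finite ∧ ∀ k, ∃ g ∈ G, R m (u k) g) :
    ∃ φ : ℕ → ℕ, StrictMono φ ∧ ∃ g : ℕ → β, ∀ j k, j ≤ k → R j (u (φ k)) (g j) := by
  have hU : ∀ m, ∃ g, ∀ᶠ k in (hyperfilter ℕ : Filter ℕ), R m (u k) g := fun m => by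
    obtain ⟨G, hG, hcov⟩ := h m
    obtain ⟨g, -, hg⟩ := (Ultrafilter.eventually_exists_mem_iff hG).1 (Eventually.of_forall hcov)
    exact ⟨g, hg⟩
  choose g hg using hU
  have hfreq : ∀ m, ∃ᶠ k in atTop, ∀ j ∈ Iic m, R j (u k) (g j) := fun m =>
    (((eventually_all_finite (finite_Iic m)).2 fun j _ => hg j).frequently).filter_mono
      (Nat.cofinite_eq_atTop ▸ hyperfilter_le_cofinite)
  obtain ⟨φ, hφ, hφR⟩ := extraction_forall_of_frequently hfreq
  exact ⟨φ, hφ, g, fun j k hjk => hφR k j hjk⟩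

section Completeness

variable {α : Type*} [MeasurableSpace α] {μ : Measure α} {p : ℝ}

lemma ae_cauchySeq_of_lintegral_enorm_sub_rpow_le (hp : 0 < p) {v : ℕ → α → ℝ}
    (hv : ∀ j, AEMeasurable (v j) μ) {C : ℝ≥0∞} (hC : C ≠ ∞)
    (h : ∀ j, ∫⁻ x, ‖v j x - v (j + 1) x‖ₑ ^ p ∂μ ≤ C * 4⁻¹ ^ j) :
    ∀ᵐ x ∂μ, CauchySeq fun j => v j x := by
  -- `S` is a.e. finite and bounds `2 ^ j` times the `j`-th gap, so the gaps decay geometrically.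
  set S : α → ℝ≥0∞ := fun x => ∑' j, 2 ^ j * ‖v j x - v (j + 1) x‖ₑ ^ p
  have hS : ∫⁻ x, S x ∂μ ≠ ∞ := by
    rw [lintegral_tsum fun j => by fun_prop]
    refine ne_top_of_le_ne_top (b := ∑' j : ℕ, C * 2⁻¹ ^ j) ?_
      (ENNReal.tsum_le_tsum fun j => ?_)
    · rw [ENNReal.tsum_mul_left, ENNReal.tsum_geometric, ENNReal.one_sub_inv_two, inv_inv]
      exact mul_ne_top hC (by simp)
    · rw [lintegral_const_mul' _ _ (by simp)]
      calc 2 ^ j * ∫⁻ x, ‖v j x - v (j + 1) x‖ₑ ^ p ∂μ ≤ 2 ^ j * (C * 4⁻¹ ^ j) := by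
            gcongr; exact h j
        _ = C * 2⁻¹ ^ j := by
            rw [mul_left_comm, ← mul_pow, show (2 : ℝ≥0∞) * 4⁻¹ = 2⁻¹ by
              rw [← ENNReal.toReal_eq_toReal_iff' (by finiteness) (by simp)]; norm_num]
  filter_upwards [ae_lt_top' (by fun_prop) hS] with x hx
  refine cauchySeq_of_edist_le_geometric (2⁻¹ ^ p⁻¹) (S x ^ p⁻¹)
    (rpow_lt_one (by norm_num) (inv_pos.2 hp)) (rpow_ne_top_of_nonneg (by positivity) hx.ne)
    fun j => ?_
  have hj : ‖v j x - v (j + 1) x‖ₑ ^ p ≤ S x * 2⁻¹ ^ j := by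
    rw [← ENNReal.inv_pow, ← div_eq_mul_inv, ENNReal.le_div_iff_mul_le (by simp) (by simp),
      mul_comm]
    exact ENNReal.le_tsum (f := fun j => 2 ^ j * ‖v j x - v (j + 1) x‖ₑ ^ p) j
  calc edist (v j x) (v (j + 1) x) = (‖v j x - v (j + 1) x‖ₑ ^ p) ^ p⁻¹ := by
        rw [edist_eq_enorm_sub, ← rpow_mul, mul_inv_cancel₀ hp.ne', rpow_one]
    _ ≤ (S x * 2⁻¹ ^ j) ^ p⁻¹ := by gcongr
    _ = S x ^ p⁻¹ * (2⁻¹ ^ p⁻¹) ^ j := by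
        rw [mul_rpow_of_nonneg _ _ (by positivity), ← rpow_natCast, ← rpow_natCast,
          ← rpow_mul, ← rpow_mul, mul_comm (j : ℝ), mul_comm]

lemma exists_lintegral_enorm_sub_rpow_le_of_cauchy (hp : 0 < p) {v : ℕ → α → ℝ}
    (hv : ∀ j, AEMeasurable (v j) μ) {C : ℝ≥0∞} (hC : C ≠ ∞)
    (h : ∀ j k, j ≤ k → ∫⁻ x, ‖v j x - v k x‖ₑ ^ p ∂μ ≤ C * 4⁻¹ ^ j) :
    ∃ f : α → ℝ, ∀ j, ∫⁻ x, ‖v j x - f x‖ₑ ^ p ∂μ ≤ C * 4⁻¹ ^ j := by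
  have hcauchy := ae_cauchySeq_of_lintegral_enorm_sub_rpow_le hp hv hC fun j =>
    h j (j + 1) j.le_succ
  refine ⟨fun x => limUnder atTop fun k => v k x, fun j => ?_⟩
  calc ∫⁻ x, ‖v j x - limUnder atTop (fun k => v k x)‖ₑ ^ p ∂μ
      = ∫⁻ x, liminf (fun k => ‖v j x - v k x‖ₑ ^ p) atTop ∂μ := by
        refine lintegral_congr_ae ?_
        filter_upwards [hcauchy] with x hx
        exact (((hx.tendsto_limUnder.const_sub (v j x)).enorm).ennrpow_const p).liminf_eq.symm
    _ ≤ liminf (fun k => ∫⁻ x, ‖v j x - v k x‖ₑ ^ p ∂μ) atTop :=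
        lintegral_liminf_le' fun k => by fun_prop
    _ ≤ C * 4⁻¹ ^ j := liminf_le_of_frequently_le'
        (eventually_atTop.2 ⟨j, fun k hk => h j k hk⟩).frequently

theorem exists_strictMono_tendsto_of_finite_nets (hp : 0 < p) {u : ℕ → α → ℝ}
    (hu : ∀ k, AEMeasurable (u k) μ)
    (hnet : ∀ ε : ℝ≥0∞, ε ≠ 0 → ε ≠ ∞ → ∃ G : Set (α → ℝ), G.Finite ∧
      ∀ k, ∃ g ∈ G, AEMeasurable g μ ∧ ∫⁻ x, ‖u k x - g x‖ₑ ^ p ∂μ ≤ ε) :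
    ∃ φ : ℕ → ℕ, StrictMono φ ∧ ∃ f : α → ℝ,
      Tendsto (fun k => ∫⁻ x, ‖u (φ k) x - f x‖ₑ ^ p ∂μ) atTop (𝓝 0) := by
  obtain ⟨φ, hφ, g, hg⟩ := exists_strictMono_forall_of_finite_nets
    (fun m f g => AEMeasurable g μ ∧ ∫⁻ x, ‖f x - g x‖ₑ ^ p ∂μ ≤ 4⁻¹ ^ m) u
    fun m => hnet _ (pow_ne_zero m (by simp)) (pow_ne_top (by simp))
  have hcauchy (j k : ℕ) (hjk : j ≤ k) :
      ∫⁻ x, ‖u (φ j) x - u (φ k) x‖ₑ ^ p ∂μ ≤ 2 ^ p * 2 * 4⁻¹ ^ j :=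
    calc ∫⁻ x, ‖u (φ j) x - u (φ k) x‖ₑ ^ p ∂μ
        ≤ 2 ^ p * (∫⁻ x, ‖u (φ j) x - g j x‖ₑ ^ p ∂μ + ∫⁻ x, ‖g j x - u (φ k) x‖ₑ ^ p ∂μ) :=
          lintegral_enorm_sub_rpow_le hp.le (hu _) (hg j j le_rfl).1
      _ ≤ 2 ^ p * (4⁻¹ ^ j + 4⁻¹ ^ j) := by
          simp_rw [enorm_sub_rev (g j _)]
          gcongr
          exacts [(hg j j le_rfl).2, (hg j k hjk).2]
      _ = 2 ^ p * 2 * 4⁻¹ ^ j := by ring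
  obtain ⟨f, hf⟩ := exists_lintegral_enorm_sub_rpow_le_of_cauchy hp (fun k => hu (φ k))
    (by finiteness) hcauchy
  refine ⟨φ, hφ, f, tendsto_of_tendsto_of_tendsto_of_le_of_le tendsto_const_nhds ?_
    (fun _ => zero_le) hf⟩
  simpa using ENNReal.Tendsto.const_mul
    (ENNReal.tendsto_pow_atTop_nhds_zero_of_lt_one (by norm_num : (4⁻¹ : ℝ≥0∞) < 1))
    (Or.inr (by finiteness))

end Completeness

section Grid

variable {n : ℕ}

lemma volume_setOf_forall_mem (t : Fin n → Set ℝ) :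
    volume {x : En n | ∀ i, x i ∈ t i} = ∏ i, volume (t i) := by
  rw [← volume_pi_pi, ← (EuclideanSpace.volume_preserving_symm_measurableEquiv_toLp
    (Fin n)).measure_preimage_equiv]
  congr 1
  ext x
  simp

lemma volume_cube (c : En n) (r : ℝ) :
    volume (cube c r) = ENNReal.ofReal (2 * r) ^ n := by
  have : cube c r = {x : En n | ∀ i, x i ∈ Icc (c i - r) (c i + r)} := by
    ext x
    simp only [cube, mem_Icc, abs_sub_le_iff]
    exact forall_congr' fun i => by constructor <;> intro h <;> constructor <;> linarith [h.1, h.2]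
  rw [this, volume_setOf_forall_mem]
  simp only [Real.volume_Icc, add_sub_sub_cancel, ← two_mul, Finset.prod_const, Finset.card_univ,
    Fintype.card_fin]

lemma measurableSet_cube {c : En n} {r : ℝ} : MeasurableSet (cube c r) := by
  simp only [cube, ofPred_forall]
  exact MeasurableSet.iInter fun i => measurableSet_le (by fun_prop) measurable_const

lemma norm_le_sqrt_mul_of_mem_cube {x : En n} {r : ℝ} (hr : 0 ≤ r) (hx : x ∈ cube 0 r) :
    ‖x‖ ≤ √n * r := by
  rw [EuclideanSpace.norm_eq, ← Real.sqrt_sq hr, ← Real.sqrt_mul (Nat.cast_nonneg n)]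
  gcongr
  calc ∑ i, ‖x i‖ ^ 2 ≤ ∑ _i : Fin n, r ^ 2 := by
        gcongr with i
        simpa using hx i
    _ = n * r ^ 2 := by simp

def gridIndex (s : ℝ) (x : En n) : Fin n → ℤ := fun i => ⌊x i / s⌋

def gridCube (s : ℝ) (z : Fin n → ℤ) : Set (En n) := gridIndex s ⁻¹' {z}

@[fun_prop]
lemma measurable_gridIndex (s : ℝ) : Measurable (gridIndex (n := n) s) := by
  unfold gridIndex
  fun_prop

lemma measurableSet_gridCube (s : ℝ) (z : Fin n → ℤ) : MeasurableSet (gridCube s z) :=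
  measurable_gridIndex s (measurableSet_singleton z)

lemma mem_gridCube_gridIndex (s : ℝ) (x : En n) : x ∈ gridCube s (gridIndex s x) := rfl

lemma pairwise_disjoint_gridCube (s : ℝ) :
    Pairwise (Function.onFun Disjoint (gridCube (n := n) s)) :=
  fun _ _ h => (disjoint_singleton.2 h).preimage _

lemma gridCube_eq {s : ℝ} (hs : 0 < s) (z : Fin n → ℤ) :
    gridCube s z = {x : En n | ∀ i, x i ∈ Ico (z i * s) ((z i + 1) * s)} := by
  ext x
  simp only [gridCube, gridIndex, mem_preimage, mem_singleton_iff, funext_iff, Int.floor_eq_iff,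
    mem_Ico, le_div_iff₀ hs, div_lt_iff₀ hs]
  exact Iff.rfl

lemma volume_gridCube {s : ℝ} (hs : 0 < s) (z : Fin n → ℤ) :
    volume (gridCube s z) = ENNReal.ofReal s ^ n := by
  rw [gridCube_eq hs, volume_setOf_forall_mem]
  simp only [Real.volume_Ico, add_mul, one_mul, add_sub_cancel_left, Finset.prod_const,
    Finset.card_univ, Fintype.card_fin]

lemma sub_mem_cube_of_mem_gridCube {s : ℝ} (hs : 0 < s) {z : Fin n → ℤ} {x y : En n}
    (hx : x ∈ gridCube s z) (hy : y ∈ gridCube s z) : y - x ∈ cube 0 s := by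
  rw [gridCube_eq hs] at hx hy
  intro i
  have := hx i
  have := hy i
  simp only [mem_Ico, PiLp.sub_apply, PiLp.zero_apply, sub_zero] at *
  rw [abs_le]
  constructor <;> nlinarith

lemma finite_gridIndex_image_closedBall {s : ℝ} (hs : 0 < s) (R : ℝ) :
    (gridIndex s '' Metric.closedBall (0 : En n) R).Finite := by
  refine (Set.Finite.pi fun _ => finite_Icc ⌊-R / s⌋ ⌊R / s⌋).subset ?_
  rintro _ ⟨x, hx, rfl⟩ i -
  have hxi : |x i| ≤ R := (PiLp.norm_apply_le x i).trans (mem_closedBall_zero_iff.1 hx)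
  exact ⟨Int.floor_mono (by gcongr; linarith [neg_abs_le (x i)]),
    Int.floor_mono (by gcongr; exact (le_abs_self _).trans hxi)⟩

end Grid

section Oscillation

variable {n : ℕ} {μ : Measure (En n)} [SFinite μ] {f : En n → ℝ} {p s : ℝ} {E : ℝ≥0∞}

lemma sum_lintegral_gridCube_le (hfμ : AEMeasurable f μ) (hf : AEMeasurable f volume)
    (hs : 0 < s) (I : Finset (Fin n → ℤ))
    (hE : ∀ h ∈ cube 0 s, ∫⁻ x, ‖f (x + h) - f x‖ₑ ^ p ∂μ ≤ E) :
    ∑ z ∈ I, ∫⁻ y in gridCube s z, ∫⁻ x in gridCube s z, ‖f x - f y‖ₑ ^ p ∂μ ≤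
      ENNReal.ofReal (2 * s) ^ n * E := by
  -- Two points of one grid cube differ by a vector of `H`: Fubini turns the double integrals
  -- over the cubes into integrals of translation differences.
  set H : Set (En n) := cube 0 s
  set Φ : En n → ℝ≥0∞ := fun x => ∫⁻ h in H, ‖f x - f (x + h)‖ₑ ^ p
  have hcube : ∀ z, ∫⁻ y in gridCube s z, ∫⁻ x in gridCube s z, ‖f x - f y‖ₑ ^ p ∂μ ≤
      ∫⁻ x in gridCube s z, Φ x ∂μ := by
    intro z
    rw [lintegral_lintegral_swap
      ((hfμ.restrict.comp_snd.sub hf.restrict.comp_fst).enorm.pow_const p)]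
    refine setLIntegral_mono' (measurableSet_gridCube s z) fun x hx => ?_
    rw [← (measurePreserving_add_left volume x).setLIntegral_comp_preimage_emb
      (measurableEmbedding_addLeft x)]
    refine lintegral_mono_set fun h hh => ?_
    simpa using sub_mem_cube_of_mem_gridCube hs hx hh
  have hshift : AEMeasurable (fun q : En n × En n => f (q.1 + q.2)) (μ.prod volume) :=
    hf.comp_snd.comp_quasiMeasurePreserving
      (measurePreserving_prod_add μ volume).quasiMeasurePreserving
  calc ∑ z ∈ I, ∫⁻ y in gridCube s z, ∫⁻ x in gridCube s z, ‖f x - f y‖ₑ ^ p ∂μ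
      ≤ ∑ z ∈ I, ∫⁻ x in gridCube s z, Φ x ∂μ := Finset.sum_le_sum fun z _ => hcube z
    _ = ∫⁻ x in ⋃ z ∈ I, gridCube s z, Φ x ∂μ := (lintegral_biUnion_finset
        ((pairwise_disjoint_gridCube s).set_pairwise _) (fun z _ => measurableSet_gridCube s z)
        _).symm
    _ ≤ ∫⁻ x, Φ x ∂μ := setLIntegral_le_lintegral _ _
    _ = ∫⁻ h in H, ∫⁻ x, ‖f x - f (x + h)‖ₑ ^ p ∂μ := lintegral_lintegral_swap
        (((hfμ.comp_fst.sub hshift).enorm.pow_const p).mono_measure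
          (Measure.prod_mono le_rfl Measure.restrict_le_self))
    _ ≤ ∫⁻ _ in H, E := setLIntegral_mono' measurableSet_cube fun h hh => by
        simpa only [enorm_sub_rev] using hE h hh
    _ = ENNReal.ofReal (2 * s) ^ n * E := by rw [setLIntegral_const, volume_cube, mul_comm]

lemma exists_sum_setLIntegral_sub_const_le (hfμ : AEMeasurable f μ) (hf : AEMeasurable f volume)
    (hs : 0 < s) (I : Finset (Fin n → ℤ))
    (hE : ∀ h ∈ cube 0 s, ∫⁻ x, ‖f (x + h) - f x‖ₑ ^ p ∂μ ≤ E) :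
    ∃ c : (Fin n → ℤ) → ℝ, ∑ z ∈ I, ∫⁻ x in gridCube s z, ‖f x - c z‖ₑ ^ p ∂μ ≤ 2 ^ n * E := by
  have hvol : ENNReal.ofReal s ^ n ≠ 0 := by simp [hs]
  have hmean : ∀ z, ∃ y, ∫⁻ x in gridCube s z, ‖f x - f y‖ₑ ^ p ∂μ ≤
      (∫⁻ y in gridCube s z, ∫⁻ x in gridCube s z, ‖f x - f y‖ₑ ^ p ∂μ) *
        (ENNReal.ofReal s ^ n)⁻¹ := by
    intro z
    have : IsFiniteMeasure (volume.restrict (gridCube s z)) :=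
      isFiniteMeasure_restrict.2 (by simp [volume_gridCube hs])
    obtain ⟨y, hy⟩ := exists_le_laverage (μ := volume.restrict (gridCube s z))
      (by simp [volume_gridCube hs, hs])
      ((hfμ.restrict.comp_snd.sub hf.restrict.comp_fst).enorm.pow_const p).lintegral_prod_right'
    refine ⟨y, hy.trans_eq ?_⟩
    rw [laverage_eq, Measure.restrict_apply_univ, volume_gridCube hs, div_eq_mul_inv]
    rfl
  choose y hy using hmean
  refine ⟨fun z => f (y z), ?_⟩
  calc ∑ z ∈ I, ∫⁻ x in gridCube s z, ‖f x - f (y z)‖ₑ ^ p ∂μ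
      ≤ ∑ z ∈ I, (∫⁻ y in gridCube s z, ∫⁻ x in gridCube s z, ‖f x - f y‖ₑ ^ p ∂μ) *
          (ENNReal.ofReal s ^ n)⁻¹ := Finset.sum_le_sum fun z _ => hy z
    _ ≤ ENNReal.ofReal (2 * s) ^ n * E * (ENNReal.ofReal s ^ n)⁻¹ := by
        rw [← Finset.sum_mul]
        gcongr
        exact sum_lintegral_gridCube_le hfμ hf hs I hE
    _ = 2 ^ n * E := by
        rw [ofReal_mul zero_le_two, ofReal_ofNat, mul_pow, mul_right_comm, mul_assoc (2 ^ n),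
          ENNReal.mul_inv_cancel hvol (by simp), mul_one]

end Oscillation

lemma exists_finite_approx_const {p : ℝ} (hp : 0 < p) (a : ℝ≥0∞) {M : ℝ≥0∞} (hM : M ≠ ∞)
    {η : ℝ≥0∞} (hη : η ≠ 0) :
    ∃ S : Set ℝ, S.Finite ∧ ∀ c : ℝ, ‖c‖ₑ ^ p * a ≤ M → ∃ d ∈ S, ‖c - d‖ₑ ^ p * a ≤ η := by
  rcases eq_or_ne a 0 with rfl | ha0
  · exact ⟨{0}, finite_singleton 0, fun c _ => ⟨0, rfl, by simp⟩⟩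
  rcases eq_or_ne a ∞ with rfl | hatop
  · refine ⟨{0}, finite_singleton 0, fun c hc => ⟨0, rfl, ?_⟩⟩
    have hc0 : ‖c‖ₑ ^ p = 0 := by
      by_contra h
      exact hM (top_le_iff.1 (mul_top h ▸ hc))
    simp [hc0]
  set R : ℝ := ((M / a) ^ p⁻¹).toReal
  have hT : TotallyBounded {c : ℝ | ‖c‖ₑ ^ p * a ≤ M} := by
    refine (totallyBounded_Icc (-R) R).subset fun c hc => abs_le.1 ?_
    rw [← Real.norm_eq_abs, ← ofReal_le_iff_le_toReal
      (rpow_ne_top_of_nonneg (by positivity) (div_ne_top hM ha0)), ofReal_norm,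
      ← rpow_rpow_inv hp.ne' ‖c‖ₑ]
    gcongr
    exact (ENNReal.le_div_iff_mul_le (Or.inl ha0) (Or.inl hatop)).2 hc
  obtain ⟨S, hS, hcover⟩ := EMetric.totallyBounded_iff.1 hT ((η / a) ^ p⁻¹)
    (rpow_pos_of_nonneg (ENNReal.div_pos hη hatop) (by positivity))
  refine ⟨S, hS, fun c hc => ?_⟩
  obtain ⟨d, hd, hcd⟩ := mem_iUnion₂.1 (hcover hc)
  refine ⟨d, hd, ?_⟩
  calc ‖c - d‖ₑ ^ p * a ≤ ((η / a) ^ p⁻¹) ^ p * a := by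
        rw [← edist_eq_enorm_sub]
        gcongr
        exact (Metric.mem_eball.1 hcd).le
    _ = η := by rw [rpow_inv_rpow hp.ne', ENNReal.div_mul_cancel ha0 hatop]

section StepFunction

variable {n : ℕ}

def gridStep (s : ℝ) (I : Finset (Fin n → ℤ)) (c : I → ℝ) (x : En n) : ℝ :=
  if h : gridIndex s x ∈ I then c ⟨gridIndex s x, h⟩ else 0

lemma measurable_gridStep (s : ℝ) (I : Finset (Fin n → ℤ)) (c : I → ℝ) :
    Measurable (gridStep s I c) :=
  (measurable_of_countable fun z => if h : z ∈ I then c ⟨z, h⟩ else 0).comp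
    (measurable_gridIndex s)

lemma lintegral_sub_gridStep (μ : Measure (En n)) (f : En n → ℝ) (p s : ℝ)
    (I : Finset (Fin n → ℤ)) (c : I → ℝ) :
    ∫⁻ x, ‖f x - gridStep s I c x‖ₑ ^ p ∂μ =
      ∫⁻ x in (⋃ z ∈ I, gridCube s z)ᶜ, ‖f x‖ₑ ^ p ∂μ +
        ∑ z : I, ∫⁻ x in gridCube s z, ‖f x - c z‖ₑ ^ p ∂μ := by
  have hU : MeasurableSet (⋃ z ∈ I, gridCube s z) :=
    I.measurableSet_biUnion fun z _ => measurableSet_gridCube s z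
  rw [← lintegral_add_compl _ hU, add_comm, lintegral_biUnion_finset
    ((pairwise_disjoint_gridCube s).set_pairwise _) (fun z _ => measurableSet_gridCube s z),
    ← Finset.sum_coe_sort I]
  congr 1
  · refine setLIntegral_congr_fun hU.compl fun x hx => ?_
    have hxI : gridIndex s x ∉ I := fun h => hx (mem_biUnion h (mem_gridCube_gridIndex s x))
    simp [gridStep, hxI]
  · refine Finset.sum_congr rfl fun z _ => setLIntegral_congr_fun (measurableSet_gridCube s z.1)
      fun x (hx : gridIndex s x = z.1) => ?_
    simp [gridStep, hx]

end StepFunction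

theorem exists_finite_gridStep_approx {n : ℕ} (μ : Measure (En n)) [SFinite μ] {p s : ℝ}
    (hp : 0 < p) (hs : 0 < s) (I : Finset (Fin n → ℤ)) {B E η : ℝ≥0∞} (hB : B ≠ ∞)
    (hE : E ≠ ∞) (hη : η ≠ 0) :
    ∃ G : Set (En n → ℝ), G.Finite ∧ (∀ g ∈ G, Measurable g) ∧
      ∀ f : En n → ℝ, AEMeasurable f μ → AEMeasurable f volume →
        ∫⁻ x, ‖f x‖ₑ ^ p ∂μ ≤ B → (∀ h ∈ cube 0 s, ∫⁻ x, ‖f (x + h) - f x‖ₑ ^ p ∂μ ≤ E) →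
        ∃ g ∈ G, ∫⁻ x, ‖f x - g x‖ₑ ^ p ∂μ ≤
          ∫⁻ x in (⋃ z ∈ I, gridCube s z)ᶜ, ‖f x‖ₑ ^ p ∂μ + 2 ^ p * (2 ^ n * E + η) := by
  set M : ℝ≥0∞ := 2 ^ p * (2 ^ n * E + B)
  have hM : M ≠ ∞ := by finiteness
  choose S hSfin hS using fun z : I =>
    exists_finite_approx_const hp (μ (gridCube s z)) hM (η := η / I.card) (by simp [hη])
  refine ⟨gridStep s I '' univ.pi S, (Set.Finite.pi hSfin).image _,
    by rintro _ ⟨c, -, rfl⟩; exact measurable_gridStep s I c, ?_⟩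
  intro f hfμ hf hfB hfE
  obtain ⟨c, hc⟩ := exists_sum_setLIntegral_sub_const_le hfμ hf hs I hfE
  rw [← Finset.sum_coe_sort I] at hc
  have hcM : ∀ z : I, ‖c z‖ₑ ^ p * μ (gridCube s z) ≤ M := fun z =>
    calc ‖c z‖ₑ ^ p * μ (gridCube s z) = ∫⁻ _ in gridCube s z, ‖c z - 0‖ₑ ^ p ∂μ := by
          rw [setLIntegral_const, sub_zero]
      _ ≤ 2 ^ p * (∫⁻ x in gridCube s z, ‖c z - f x‖ₑ ^ p ∂μ +
            ∫⁻ x in gridCube s z, ‖f x - 0‖ₑ ^ p ∂μ) :=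
          lintegral_enorm_sub_rpow_le hp.le aemeasurable_const hfμ.restrict
      _ ≤ 2 ^ p * (2 ^ n * E + B) := by
          gcongr
          · simp_rw [enorm_sub_rev (c z)]
            exact (Finset.single_le_sum (fun _ _ => zero_le) (Finset.mem_univ z)).trans hc
          · simpa using setLIntegral_le_lintegral _ _ |>.trans hfB
  choose d hdS hd using fun z : I => hS z (c z) (hcM z)
  refine ⟨gridStep s I d, mem_image_of_mem _ fun z _ => hdS z, ?_⟩
  rw [lintegral_sub_gridStep]
  gcongr
  calc ∑ z : I, ∫⁻ x in gridCube s z, ‖f x - d z‖ₑ ^ p ∂μ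
      ≤ ∑ z : I, 2 ^ p * (∫⁻ x in gridCube s z, ‖f x - c z‖ₑ ^ p ∂μ +
          ‖c z - d z‖ₑ ^ p * μ (gridCube s z)) := by
        gcongr with z
        rw [← setLIntegral_const]
        exact lintegral_enorm_sub_rpow_le hp.le hfμ.restrict aemeasurable_const
    _ = 2 ^ p * (∑ z : I, ∫⁻ x in gridCube s z, ‖f x - c z‖ₑ ^ p ∂μ +
          ∑ z : I, ‖c z - d z‖ₑ ^ p * μ (gridCube s z)) := by
        rw [← Finset.mul_sum, Finset.sum_add_distrib]
    _ ≤ 2 ^ p * (2 ^ n * E + η) := by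
        gcongr
        calc ∑ z : I, ‖c z - d z‖ₑ ^ p * μ (gridCube s z) ≤ ∑ _z : I, η / I.card :=
              Finset.sum_le_sum fun z _ => hd z
          _ ≤ η := by simpa using ENNReal.mul_div_le

theorem exists_finite_net {n : ℕ} (μ : Measure (En n)) [SFinite μ] (hμ : μ ≪ volume) {p : ℝ}
    (hp : 0 < p) {F : Set (En n → ℝ)} (hFmeas : ∀ f ∈ F, AEMeasurable f volume) {B : ℝ≥0∞}
    (hB : B ≠ ∞) (hFbdd : ∀ f ∈ F, ∫⁻ x, ‖f x‖ₑ ^ p ∂μ ≤ B)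
    (hFvanish : Tendsto (fun N : ℝ => ⨆ f ∈ F, ∫⁻ x in {x | N < ‖x‖}, ‖f x‖ₑ ^ p ∂μ)
      atTop (𝓝 0))
    (hFequi : Tendsto (fun h : En n => ⨆ f ∈ F, ∫⁻ x, ‖f (x + h) - f x‖ₑ ^ p ∂μ) (𝓝 0) (𝓝 0))
    {ε : ℝ≥0∞} (hε : ε ≠ 0) (hε' : ε ≠ ∞) :
    ∃ G : Set (En n → ℝ), G.Finite ∧ (∀ g ∈ G, Measurable g) ∧
      ∀ f ∈ F, ∃ g ∈ G, ∫⁻ x, ‖f x - g x‖ₑ ^ p ∂μ ≤ ε := by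
  have hε3 : 0 < ε / 3 := ENNReal.div_pos hε (by simp)
  have h2p : (2 : ℝ≥0∞) ^ p ≠ 0 := by positivity
  obtain ⟨N, hN⟩ := (hFvanish.eventually (gt_mem_nhds hε3)).exists
  set E : ℝ≥0∞ := ε / 3 / (2 ^ p * 2 ^ n)
  obtain ⟨δ, hδ, hδE⟩ := Metric.eventually_nhds_iff.1 (hFequi.eventually (gt_mem_nhds
    (ENNReal.div_pos hε3.ne' (by finiteness) : 0 < E)))
  set s : ℝ := δ / (√n + 1)
  have hs : 0 < s := by positivity
  have hcube : ∀ h ∈ cube 0 s, dist h 0 < δ := fun h hh => by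
    rw [dist_zero_right]
    calc ‖h‖ ≤ √n * s := norm_le_sqrt_mul_of_mem_cube hs.le hh
      _ < (√n + 1) * s := by gcongr; linarith
      _ = δ := mul_div_cancel₀ δ (by positivity)
  obtain ⟨I, hI⟩ : ∃ I : Finset (Fin n → ℤ), ∀ x : En n, ‖x‖ ≤ N → gridIndex s x ∈ I :=
    ⟨(finite_gridIndex_image_closedBall hs N).toFinset, fun x hx => by
      simpa using mem_image_of_mem (gridIndex s) (mem_closedBall_zero_iff.2 hx)⟩
  have hE : E ≠ ∞ := div_ne_top (div_ne_top hε' (by simp)) (mul_ne_zero h2p (by simp))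
  obtain ⟨G, hGfin, hGmeas, hG⟩ := exists_finite_gridStep_approx μ hp hs I hB hE
    (η := ε / 3 / 2 ^ p)
    (ENNReal.div_pos hε3.ne' (by finiteness)).ne'
  refine ⟨G, hGfin, hGmeas, fun f hf => ?_⟩
  obtain ⟨g, hgG, hg⟩ := hG f ((hFmeas f hf).mono_ac hμ) (hFmeas f hf) (hFbdd f hf)
    fun h hh => (le_iSup₂ (f := fun f (_ : f ∈ F) => ∫⁻ x, ‖f (x + h) - f x‖ₑ ^ p ∂μ) f hf).trans
      (hδE (hcube h hh)).le
  have htail : ∫⁻ x in (⋃ z ∈ I, gridCube s z)ᶜ, ‖f x‖ₑ ^ p ∂μ ≤ ε / 3 := by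
    refine (lintegral_mono_set fun x hx => ?_).trans ((le_iSup₂ (f := fun f (_ : f ∈ F) =>
      ∫⁻ x in {x | N < ‖x‖}, ‖f x‖ₑ ^ p ∂μ) f hf).trans hN.le)
    by_contra hxN
    exact hx (mem_biUnion (hI x (not_lt.1 hxN)) (mem_gridCube_gridIndex s x))
  refine ⟨g, hgG, hg.trans ?_⟩
  calc ∫⁻ x in (⋃ z ∈ I, gridCube s z)ᶜ, ‖f x‖ₑ ^ p ∂μ + 2 ^ p * (2 ^ n * E + ε / 3 / 2 ^ p)
      = ∫⁻ x in (⋃ z ∈ I, gridCube s z)ᶜ, ‖f x‖ₑ ^ p ∂μ +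
          ((2 ^ p * 2 ^ n) * E + 2 ^ p * (ε / 3 / 2 ^ p)) := by ring
    _ ≤ ε / 3 + ε / 3 + ε / 3 := by
        rw [add_assoc]
        gcongr <;> exact ENNReal.mul_div_le
    _ = ε := ENNReal.add_thirds ε

end FrechetKolmogorov

open FrechetKolmogorov

theorem weighted_frechet_kolmogorov_general (n : ℕ) (w : En n → ℝ)
    (hw : LocallyIntegrable w volume)
    (p : ℝ) (hp : 0 < p) (F : Set (En n → ℝ))
    (hFmeas : ∀ f ∈ F, AEStronglyMeasurable f volume)
    (hFbdd : ∃ B : ℝ, ∀ f ∈ F,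
      (∫⁻ x, ENNReal.ofReal (|f x| ^ p * w x)) ≤ ENNReal.ofReal B)
    (hFvanish : Tendsto (fun N : ℝ => ⨆ f ∈ F,
      ∫⁻ x in {x : En n | N < ‖x‖}, ENNReal.ofReal (|f x| ^ p * w x)) atTop (𝓝 0))
    (hFequi : Tendsto (fun h : En n => ⨆ f ∈ F,
      ∫⁻ x, ENNReal.ofReal (|f (x + h) - f x| ^ p * w x)) (𝓝 0) (𝓝 0)) :
    ∀ u : ℕ → En n → ℝ, (∀ k, u k ∈ F) →
      ∃ φ : ℕ → ℕ, StrictMono φ ∧ ∃ f : En n → ℝ,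
        Tendsto (fun k => ∫⁻ x, ENNReal.ofReal (|u (φ k) x - f x| ^ p * w x))
          atTop (𝓝 0) := by
  intro u hu
  set μ := volume.withDensity fun x => ENNReal.ofReal (w x)
  have hμ : μ ≪ volume := withDensity_absolutelyContinuous _ _
  have hwm : AEMeasurable w volume := hw.aestronglyMeasurable.aemeasurable
  have hweight (g : En n → ℝ) :
      ∫⁻ x, ENNReal.ofReal (|g x| ^ p * w x) = ∫⁻ x, ‖g x‖ₑ ^ p ∂μ :=
    lintegral_ofReal_rpow_mul hwm hp.le g
  have hweight_set (S : Set (En n)) (g : En n → ℝ) :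
      ∫⁻ x in S, ENNReal.ofReal (|g x| ^ p * w x) = ∫⁻ x in S, ‖g x‖ₑ ^ p ∂μ := by
    rw [lintegral_ofReal_rpow_mul hwm.restrict hp.le, restrict_withDensity']
  simp only [hweight, hweight_set] at hFbdd hFvanish hFequi ⊢
  obtain ⟨B, hB⟩ := hFbdd
  have hFmeas' : ∀ f ∈ F, AEMeasurable f volume := fun f hf => (hFmeas f hf).aemeasurable
  refine exists_strictMono_tendsto_of_finite_nets hp (fun k => (hFmeas' _ (hu k)).mono_ac hμ)
    fun ε hε hε' => ?_
  obtain ⟨G, hG, hGmeas, hGnet⟩ :=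
    exists_finite_net μ hμ hp hFmeas' ofReal_ne_top hB hFvanish hFequi hε hε'
  exact ⟨G, hG, fun k => (hGnet _ (hu k)).imp fun g ⟨hg, hug⟩ =>
    ⟨hg, (hGmeas g hg).aemeasurable, hug⟩⟩

/-- weighted Fréchet–Kolmogorov criterion, Lemma 2.4: if `w` and
`w^{-1/(p₀-1)}` are weights for some `p₀ > 1`, `0 < p < ∞`, and `𝓕 ⊆ L^p(w)` is bounded,
uniformly vanishes at infinity, and is uniformly equicontinuous, then `𝓕` is sequentially
compact in `L^p(w)`. -/
theorem weighted_frechet_kolmogorov (n : ℕ) (hn : 1 ≤ n) (w : En n → ℝ)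
    (hw0 : ∀ x, 0 ≤ w x) (hw : LocallyIntegrable w volume)
    (p₀ : ℝ) (hp₀ : 1 < p₀)
    (hw' : LocallyIntegrable (fun x => w x ^ (-(1/(p₀ - 1)))) volume)
    (p : ℝ) (hp : 0 < p) (F : Set (En n → ℝ))
    (hFmeas : ∀ f ∈ F, AEStronglyMeasurable f volume)
    (hFbdd : ∃ B : ℝ, ∀ f ∈ F,
      (∫⁻ x, ENNReal.ofReal (|f x| ^ p * w x)) ≤ ENNReal.ofReal B)
    (hFvanish : Tendsto (fun N : ℝ => ⨆ f ∈ F,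
      ∫⁻ x in {x : En n | N < ‖x‖}, ENNReal.ofReal (|f x| ^ p * w x)) atTop (𝓝 0))
    (hFequi : Tendsto (fun h : En n => ⨆ f ∈ F,
      ∫⁻ x, ENNReal.ofReal (|f (x + h) - f x| ^ p * w x)) (𝓝 0) (𝓝 0)) :
    ∀ u : ℕ → En n → ℝ, (∀ k, u k ∈ F) →
      ∃ φ : ℕ → ℕ, StrictMono φ ∧ ∃ f : En n → ℝ,
        Tendsto (fun k => ∫⁻ x, ENNReal.ofReal (|u (φ k) x - f x| ^ p * w x))
          atTop (𝓝 0) :=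
  weighted_frechet_kolmogorov_general n w hw p hp F hFmeas hFbdd hFvanish hFequi

end
end
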